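/- Let N ≥ 1 and let A be a bounded subset of ℝ^N equipped with the Euclidean distance. Then there exists a map K from A into the Gromov–Hausdorff space such that for all x, y ∈ A: d_GH(K(x), K(y)) ≤ ‖x − y‖₂ ≤ √N · d_GH(K(x), K(y)). In particular, every bounded subset of Euclidean space embeds into the Gromov–Hausdorff space by a bilipschitz map. -/

import Mathlib

/-!
Fix `M > 0` bounding the norms on `A`. A point `x = (x_1, …, x_N)` is sent to the ultrametric
space on `{0, …, N}` with `d(i, j) = 8M·(max i j + 1) + 2 x_{max i j}` for `i ≠ j`, where
`x_0 := 0`. The identity correspondence between the spaces of `x` and `y` has distortion at most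
`2‖x - y‖_∞`, so `d_GH ≤ ‖x - y‖_∞ ≤ ‖x - y‖₂`. Conversely, in an optimal coupling the distance
`d(0, k)` of the space of `x` is matched within `2 d_GH` by a distance of the space of `y`; the
steps of size `8M` put every distance of the space of `y` except its own `d(0, k)` at least `4M`
away, so `2|x_k - y_k| ≤ 2 d_GH` for every `k`, whence `‖x - y‖₂ ≤ √N d_GH`.
-/

open GromovHausdorff Metric Set

namespace GromovHausdorff

variable {X Y : Type*} [MetricSpace X] [CompactSpace X] [Nonempty X]
  [MetricSpace Y] [CompactSpace Y] [Nonempty Y]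

theorem ghDist_le_of_abs_dist_sub_le (e : X ≃ Y) {ε : ℝ}
    (h : ∀ a b, |dist (e a) (e b) - dist a b| ≤ ε) : ghDist X Y ≤ ε / 2 := by
  have := ghDist_le_of_approx_subsets (s := univ) (fun a => e a) (ε₁ := 0) (ε₃ := 0)
    (fun a => ⟨a, mem_univ a, by simp⟩) (fun b => ⟨⟨e.symm b, mem_univ _⟩, by simp⟩)
    (fun a b => by rw [abs_sub_comm]; exact h a b)
  simpa using this

theorem exists_abs_dist_sub_le_two_mul_ghDist (a b : X) :
    ∃ a' b' : Y, |dist a' b' - dist a b| ≤ 2 * ghDist X Y := by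
  obtain ⟨Φ, Ψ, hΦ, hΨ, hgh⟩ := ghDist_eq_hausdorffDist X Y
  have hΨc : IsCompact (range Ψ) := isCompact_range hΨ.continuous
  have hfin : hausdorffEDist (range Φ) (range Ψ) ≠ ⊤ :=
    hausdorffEDist_ne_top_of_nonempty_of_bounded (range_nonempty _) (range_nonempty _)
      (isCompact_range hΦ.continuous).isBounded hΨc.isBounded
  have approx : ∀ p : X, ∃ q : Y, dist (Φ p) (Ψ q) ≤ ghDist X Y := fun p => by
    obtain ⟨_, ⟨q, rfl⟩, hq⟩ := hΨc.exists_infDist_eq_dist (range_nonempty _) (Φ p)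
    exact ⟨q, hgh ▸ hq ▸ infDist_le_hausdorffDist_of_mem (mem_range_self p) hfin⟩
  obtain ⟨a', ha'⟩ := approx a
  obtain ⟨b', hb'⟩ := approx b
  refine ⟨a', b', ?_⟩
  rw [← hΦ.dist_eq, ← hΨ.dist_eq]
  calc |dist (Ψ a') (Ψ b') - dist (Φ a) (Φ b)|
      ≤ dist (Φ a) (Ψ a') + dist (Φ b) (Ψ b') := by
        simpa [Real.dist_eq, abs_sub_comm] using dist_dist_dist_le (Φ a) (Φ b) (Ψ a') (Ψ b')
    _ ≤ 2 * ghDist X Y := by linarith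

end GromovHausdorff

section MaxDist

variable {ι : Type*} [LinearOrder ι] {f : ι → ℝ}

def maxDist (f : ι → ℝ) (i j : ι) : ℝ := if i = j then 0 else f (max i j)

@[simp]
theorem maxDist_self (f : ι → ℝ) (i : ι) : maxDist f i i = 0 := if_pos rfl

theorem maxDist_of_ne {i j : ι} (h : i ≠ j) : maxDist f i j = f (max i j) := if_neg h

theorem maxDist_comm (f : ι → ℝ) (i j : ι) : maxDist f i j = maxDist f j i := by
  by_cases h : i = j
  · simp [maxDist, h]
  · simp [maxDist, h, Ne.symm h, max_comm]

theorem maxDist_nonneg (hf : ∀ i, 0 ≤ f i) (i j : ι) : 0 ≤ maxDist f i j := by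
  unfold maxDist; split_ifs
  exacts [le_rfl, hf _]

theorem maxDist_le_max (hf : Monotone f) (hnn : ∀ i, 0 ≤ f i) (i j k : ι) :
    maxDist f i k ≤ max (maxDist f i j) (maxDist f j k) := by
  by_cases hik : i = k
  · subst hik; simpa using le_max_of_le_right (maxDist_nonneg hnn j i)
  by_cases hij : i = j
  · subst hij; exact le_max_right _ _
  by_cases hjk : j = k
  · subst hjk; exact le_max_left _ _
  simp only [maxDist, if_neg hik, if_neg hij, if_neg hjk]
  rw [← hf.map_max]
  exact hf (max_le (le_max_of_le_left (le_max_left _ _)) (le_max_of_le_right (le_max_right _ _)))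

end MaxDist

def WithMaxDist {ι : Type*} (_f : ι → ℝ) : Type _ := ι

namespace WithMaxDist

variable {ι : Type*} [LinearOrder ι] {f g : ι → ℝ}

def equiv (f : ι → ℝ) : ι ≃ WithMaxDist f := Equiv.refl ι

instance [Finite ι] : Finite (WithMaxDist f) := ‹Finite ι›

instance [Nonempty ι] : Nonempty (WithMaxDist f) := ‹Nonempty ι›

noncomputable instance [hf : Fact (Monotone f)] [hpos : Fact (∀ i, 0 < f i)] :
    MetricSpace (WithMaxDist f) where
  dist a b := maxDist f ((equiv f).symm a) ((equiv f).symm b)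
  dist_self _ := maxDist_self f _
  dist_comm _ _ := maxDist_comm f _ _
  dist_triangle a b c := by
    have hnn i := (hpos.out i).le
    exact (maxDist_le_max hf.out hnn _ _ _).trans
      (max_le_add_of_nonneg (maxDist_nonneg hnn _ _) (maxDist_nonneg hnn _ _))
  eq_of_dist_eq_zero {a b} h := by
    by_contra hab
    exact (hpos.out _).ne' ((if_neg hab).symm.trans h)

variable [Fact (Monotone f)] [Fact (∀ i, 0 < f i)] [Fact (Monotone g)] [Fact (∀ i, 0 < g i)]

theorem dist_equiv (i j : ι) : dist (equiv f i) (equiv f j) = maxDist f i j := rfl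

variable [Finite ι] [Nonempty ι]

theorem ghDist_le {ε : ℝ} (h : ∀ i, |g i - f i| ≤ ε) :
    ghDist (WithMaxDist f) (WithMaxDist g) ≤ ε / 2 := by
  refine ghDist_le_of_abs_dist_sub_le ((equiv f).symm.trans (equiv g)) fun a b => ?_
  obtain ⟨i, rfl⟩ := (equiv f).surjective a
  obtain ⟨j, rfl⟩ := (equiv f).surjective b
  by_cases hij : i = j
  · subst hij
    simpa using (abs_nonneg _).trans (h i)
  · simpa [dist_equiv, maxDist_of_ne hij] using h (max i j)

theorem le_two_mul_ghDist {i j : ι} {δ : ℝ} (hji : j < i) (hfi : δ ≤ f i)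
    (hg : ∀ k, δ ≤ |g k - f i|) : δ ≤ 2 * ghDist (WithMaxDist f) (WithMaxDist g) := by
  obtain ⟨a', b', hab'⟩ := exists_abs_dist_sub_le_two_mul_ghDist (Y := WithMaxDist g)
    (equiv f j) (equiv f i)
  obtain ⟨k, rfl⟩ := (equiv g).surjective a'
  obtain ⟨l, rfl⟩ := (equiv g).surjective b'
  rw [dist_equiv, dist_equiv, maxDist_of_ne hji.ne, max_eq_right hji.le] at hab'
  refine le_trans ?_ hab'
  unfold maxDist
  split_ifs
  · simpa [abs_of_pos ((Fact.out : ∀ i, 0 < f i) i)] using hfi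
  · exact hg _

end WithMaxDist

section Staircase

variable {n : ℕ} {M : ℝ} {v w : Fin n → ℝ}

/-- The slope `8M` keeps values at different `k` at least `4M` apart as long as
`|v k|, |w k| ≤ M`. -/
def staircase (M : ℝ) (v : Fin n → ℝ) (k : Fin n) : ℝ := 8 * M * (k + 1) + 2 * v k

theorem staircase_sub_staircase (k : Fin n) :
    staircase M w k - staircase M v k = 2 * (w k - v k) := by
  unfold staircase; ring

theorem staircase_add_le_of_lt (hv : ∀ k, |v k| ≤ M) (hw : ∀ k, |w k| ≤ M) {k l : Fin n}
    (hkl : k < l) : staircase M v k + 4 * M ≤ staircase M w l := by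
  have hkl' : (k : ℝ) + 1 ≤ l := by exact_mod_cast hkl
  have := abs_le.1 (hv k); have := abs_le.1 (hw l)
  unfold staircase; nlinarith

theorem staircase_pos (hM : 0 < M) (hv : ∀ k, |v k| ≤ M) (k : Fin n) : 0 < staircase M v k := by
  have := abs_le.1 (hv k)
  unfold staircase; nlinarith [(k : ℕ).cast_nonneg (α := ℝ)]

theorem staircase_monotone (hv : ∀ k, |v k| ≤ M) : Monotone (staircase M v) := by
  intro k l hkl
  rcases hkl.eq_or_lt with rfl | hlt
  · rfl
  · linarith [staircase_add_le_of_lt hv hv hlt, (abs_nonneg _).trans (hv k)]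

theorem two_mul_abs_sub_le_four_mul (hv : ∀ k, |v k| ≤ M) (hw : ∀ k, |w k| ≤ M) (k : Fin n) :
    2 * |w k - v k| ≤ 4 * M := by
  linarith [abs_sub (w k) (v k), hv k, hw k]

theorem two_mul_abs_sub_le_staircase (hv : ∀ k, |v k| ≤ M) (hw : ∀ k, |w k| ≤ M) {j k : Fin n}
    (hjk : j < k) : 2 * |w k - v k| ≤ staircase M v k := by
  have hj : 0 ≤ staircase M v j := by
    have := abs_le.1 (hv j)
    unfold staircase; nlinarith [(j : ℕ).cast_nonneg (α := ℝ)]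
  linarith [two_mul_abs_sub_le_four_mul hv hw k, staircase_add_le_of_lt hv hv hjk]

theorem two_mul_abs_sub_le_abs_staircase_sub (hv : ∀ k, |v k| ≤ M) (hw : ∀ k, |w k| ≤ M)
    (k l : Fin n) : 2 * |w k - v k| ≤ |staircase M w l - staircase M v k| := by
  rcases eq_or_ne k l with rfl | hkl
  · rw [staircase_sub_staircase, abs_mul, abs_two]
  refine (two_mul_abs_sub_le_four_mul hv hw k).trans ?_
  rcases hkl.lt_or_gt with hkl | hlk
  · linarith [staircase_add_le_of_lt hv hw hkl, le_abs_self (staircase M w l - staircase M v k)]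
  · linarith [staircase_add_le_of_lt hw hv hlk, neg_abs_le (staircase M w l - staircase M v k)]

end Staircase

namespace EuclideanSpace

theorem dist_le_sqrt_card_mul {ι : Type*} [Fintype ι] {x y : EuclideanSpace ℝ ι} {r : ℝ}
    (h : ∀ i, |x i - y i| ≤ r) : dist x y ≤ √(Fintype.card ι) * r := by
  rcases isEmpty_or_nonempty ι with _ | ⟨⟨i₀⟩⟩
  · simp [EuclideanSpace.dist_eq]
  have hr : 0 ≤ r := (abs_nonneg _).trans (h i₀)
  calc dist x y = √(∑ i, dist (x i) (y i) ^ 2) := EuclideanSpace.dist_eq x y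
    _ ≤ √(∑ _i : ι, r ^ 2) := by
      gcongr with i
      exact h i
    _ = √(Fintype.card ι) * r := by
      rw [Finset.sum_const, Finset.card_univ, nsmul_eq_mul, Real.sqrt_mul (Nat.cast_nonneg _),
        Real.sqrt_sq hr]

variable {n : ℕ}

theorem abs_cons_le_of_norm_le {x : EuclideanSpace ℝ (Fin n)} {M : ℝ} (hx : ‖x‖ ≤ M)
    (k : Fin (n + 1)) : |(Fin.cons 0 x : Fin (n + 1) → ℝ) k| ≤ M := by
  induction k using Fin.cases with
  | zero => simpa using (norm_nonneg x).trans hx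
  | succ k => simpa using (PiLp.norm_apply_le x k).trans hx

theorem abs_cons_sub_cons_le_dist (x y : EuclideanSpace ℝ (Fin n)) (k : Fin (n + 1)) :
    |(Fin.cons 0 x : Fin (n + 1) → ℝ) k - (Fin.cons 0 y : Fin (n + 1) → ℝ) k| ≤ dist x y := by
  induction k using Fin.cases with
  | zero => simp
  | succ k => simpa [Real.dist_eq] using PiLp.dist_apply_le x y k

end EuclideanSpace

open EuclideanSpace

theorem bounded_subset_euclidean_bilipschitz_embedding_GH_general {N : ℕ}
    (A : Set (EuclideanSpace ℝ (Fin N))) (hA : Bornology.IsBounded A) :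
    ∃ K : A → GromovHausdorff.GHSpace,
      ∀ x y : A,
        dist (K x) (K y) ≤ dist (x : EuclideanSpace ℝ (Fin N)) (y : EuclideanSpace ℝ (Fin N)) ∧
        dist (x : EuclideanSpace ℝ (Fin N)) (y : EuclideanSpace ℝ (Fin N)) ≤
          Real.sqrt N * dist (K x) (K y) := by
  obtain ⟨M, hM, hAM⟩ := hA.exists_pos_norm_le
  let v (x : A) : Fin (N + 1) → ℝ := Fin.cons 0 (x : EuclideanSpace ℝ (Fin N))
  have hv (x : A) : ∀ k, |v x k| ≤ M := abs_cons_le_of_norm_le (hAM x x.2)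
  have instMono (x : A) : Fact (Monotone (staircase M (v x))) := ⟨staircase_monotone (hv x)⟩
  have instPos (x : A) : Fact (∀ k, 0 < staircase M (v x) k) := ⟨staircase_pos hM (hv x)⟩
  refine ⟨fun x => toGHSpace (WithMaxDist (staircase M (v x))), fun x y => ⟨?_, ?_⟩⟩
  · refine (WithMaxDist.ghDist_le fun k => ?_).trans_eq (mul_div_cancel_left₀ _ two_ne_zero)
    rw [staircase_sub_staircase, abs_mul, abs_two, dist_comm]
    exact mul_le_mul_of_nonneg_left (abs_cons_sub_cons_le_dist _ _ k) zero_le_two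
  · refine (dist_le_sqrt_card_mul fun n => ?_).trans_eq (by rw [Fintype.card_fin])
    have key := WithMaxDist.le_two_mul_ghDist (Fin.succ_pos n)
      (two_mul_abs_sub_le_staircase (hv x) (hv y) (Fin.succ_pos n))
      (two_mul_abs_sub_le_abs_staircase_sub (hv x) (hv y) n.succ)
    rw [abs_sub_comm] at key
    simpa [v, ghDist] using key

/-- A bounded subset of Euclidean space embeds into the Gromov–Hausdorff space by a
bilipschitz map: d_GH(K x, K y) ≤ ‖x - y‖₂ ≤ √N ⋅ d_GH(K x, K y). -/
theorem bounded_subset_euclidean_bilipschitz_embedding_GH {N : ℕ} (hN : 1 ≤ N)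
    (A : Set (EuclideanSpace ℝ (Fin N))) (hA : Bornology.IsBounded A) :
    ∃ K : A → GromovHausdorff.GHSpace,
      ∀ x y : A,
        dist (K x) (K y) ≤ dist (x : EuclideanSpace ℝ (Fin N)) (y : EuclideanSpace ℝ (Fin N)) ∧
        dist (x : EuclideanSpace ℝ (Fin N)) (y : EuclideanSpace ℝ (Fin N)) ≤
          Real.sqrt N * dist (K x) (K y) :=
  bounded_subset_euclidean_bilipschitz_embedding_GH_general A hA
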